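/- Let γₙ be the standard Gaussian probability measure on ℝⁿ, with density (2π)^(−n/2)·exp(−‖x‖²/2). Then for any 0 < ε < 1, the measure of the set {y ∈ ℝⁿ : ‖y‖² ≤ (1 − ε)n} is at most exp(−ε²n/4). -/

import Mathlib

/-!
A Chernoff bound. For `l ≥ 0`, on `{‖y‖² ≤ t}` the Gaussian density is at most
`exp (l t)` times the density with `e^{-(1/2 + l)‖y‖²}` in place of `e^{-‖y‖²/2}`,
whose total mass is `(1 + 2l)^{-n/2}`. Taking `l = ε/2`, `t = (1 - ε)n` gives the bound
`exp (n (ε(1 - ε) - log (1 + ε)) / 2)`, and `log (1 + ε) ≥ ε - ε²/2` finishes the proof.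
-/

open MeasureTheory Real

/-- The standard Gaussian probability measure on `ℝⁿ`, with density
`(2π)^{-n/2} e^{-‖x‖²/2}` with respect to Lebesgue measure. -/
noncomputable def stdGaussian (n : ℕ) : Measure (EuclideanSpace ℝ (Fin n)) :=
  volume.withDensity fun x =>
    ENNReal.ofReal ((2 * Real.pi) ^ (-(n : ℝ) / 2) * Real.exp (-‖x‖ ^ 2 / 2))

lemma Real.sub_sq_div_two_le_log_one_add {x : ℝ} (hx : 0 ≤ x) :
    x - x ^ 2 / 2 ≤ log (1 + x) := by
  refine le_trans ?_ (le_log_one_add_of_nonneg hx)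
  rw [le_div_iff₀ (by linarith)]
  nlinarith [pow_nonneg hx 3]

theorem lintegral_ofReal_exp_neg_mul_sq_norm {V : Type*} [NormedAddCommGroup V]
    [InnerProductSpace ℝ V] [FiniteDimensional ℝ V] [MeasurableSpace V] [BorelSpace V]
    {b : ℝ} (hb : 0 < b) :
    ∫⁻ v : V, ENNReal.ofReal (rexp (-b * ‖v‖ ^ 2)) =
      ENNReal.ofReal ((π / b) ^ (Module.finrank ℝ V / 2 : ℝ)) := by
  have h := GaussianFourier.integral_rexp_neg_mul_sq_norm (V := V) hb
  rw [integral_eq_lintegral_of_nonneg_ae (.of_forall fun _ ↦ by positivity) (by fun_prop)] at h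
  -- `ENNReal.toReal ⊤ = 0`, whereas the Gaussian integral is positive
  have hfin : ∫⁻ v : V, ENNReal.ofReal (rexp (-b * ‖v‖ ^ 2)) ≠ ⊤ := by
    intro htop
    rw [htop, ENNReal.toReal_top] at h
    exact (rpow_pos_of_pos (by positivity) _).ne h
  rw [← h, ENNReal.ofReal_toReal hfin]

theorem stdGaussian_setOf_sq_norm_le_le (n : ℕ) (t : ℝ) {l : ℝ} (hl : 0 ≤ l) :
    stdGaussian n {y | ‖y‖ ^ 2 ≤ t} ≤
      ENNReal.ofReal (rexp (l * t) * (1 + 2 * l) ^ (-(n : ℝ) / 2)) := by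
  calc stdGaussian n {y | ‖y‖ ^ 2 ≤ t}
      = ∫⁻ x in {y | ‖y‖ ^ 2 ≤ t},
          ENNReal.ofReal ((2 * π) ^ (-(n : ℝ) / 2) * rexp (-‖x‖ ^ 2 / 2)) :=
        withDensity_apply' _ _
    _ ≤ ∫⁻ x in {y | ‖y‖ ^ 2 ≤ t},
          ENNReal.ofReal ((2 * π) ^ (-(n : ℝ) / 2) * rexp (l * t)) *
          ENNReal.ofReal (rexp (-(1 / 2 + l) * ‖x‖ ^ 2)) := by
        refine setLIntegral_mono' (measurableSet_le (by fun_prop) measurable_const)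
          fun x (hx : ‖x‖ ^ 2 ≤ t) ↦ ?_
        rw [← ENNReal.ofReal_mul (by positivity), mul_assoc, ← exp_add]
        gcongr
        linear_combination mul_le_mul_of_nonneg_left hx hl
    _ ≤ ∫⁻ x, ENNReal.ofReal ((2 * π) ^ (-(n : ℝ) / 2) * rexp (l * t)) *
          ENNReal.ofReal (rexp (-(1 / 2 + l) * ‖x‖ ^ 2)) :=
        setLIntegral_le_lintegral _ _
    _ = ENNReal.ofReal
          ((2 * π) ^ (-(n : ℝ) / 2) * rexp (l * t) * (π / (1 / 2 + l)) ^ ((n : ℝ) / 2)) := by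
        rw [lintegral_const_mul' _ _ ENNReal.ofReal_ne_top,
          lintegral_ofReal_exp_neg_mul_sq_norm (by positivity), finrank_euclideanSpace_fin,
          ← ENNReal.ofReal_mul (by positivity)]
    _ = ENNReal.ofReal (rexp (l * t) * (1 + 2 * l) ^ (-(n : ℝ) / 2)) := by
        have h : π / (1 / 2 + l) = 2 * π / (1 + 2 * l) := by field_simp
        have hpos : (0 : ℝ) < (2 * π) ^ ((n : ℝ) / 2) := by positivity
        rw [h, div_rpow (by positivity) (by positivity), neg_div, rpow_neg (by positivity),
          rpow_neg (by positivity)]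
        field_simp

theorem stmt_6_general (n : ℕ) (ε : ℝ) (hε0 : 0 < ε) :
    stdGaussian n {y : EuclideanSpace ℝ (Fin n) | ‖y‖ ^ 2 ≤ (1 - ε) * n} ≤
      ENNReal.ofReal (Real.exp (-(ε ^ 2) * n / 4)) := by
  refine (stdGaussian_setOf_sq_norm_le_le n _ (l := ε / 2) (by positivity)).trans ?_
  gcongr
  rw [show 1 + 2 * (ε / 2) = 1 + ε by ring, rpow_def_of_pos (by positivity), ← exp_add]
  gcongr
  have hn : (0 : ℝ) ≤ n := n.cast_nonneg
  linear_combination (1 / 2) * mul_le_mul_of_nonneg_left (sub_sq_div_two_le_log_one_add hε0.le) hn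

/-- Lemma 2.1(1): for `0 < ε < 1`, the standard Gaussian measure of
`{y : ‖y‖² ≤ (1 - ε)n}` is at most `exp(-ε²n/4)`. -/
theorem stmt_6 (n : ℕ) (ε : ℝ) (hε0 : 0 < ε) (hε1 : ε < 1) :
    stdGaussian n {y : EuclideanSpace ℝ (Fin n) | ‖y‖ ^ 2 ≤ (1 - ε) * n} ≤
      ENNReal.ofReal (Real.exp (-(ε ^ 2) * n / 4)) :=
  stmt_6_general n ε hε0
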